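/- For a smooth function v(x,y,t) define the operators A = ∂_y - (λ - v_x)∂_x and B = ∂_t - (λ² - v_xλ - v_y)∂_x. Then [A,B] = c(x,y,t)∂_x where c = -(v_{xt} - v_{yy} - v_x v_{xy} + v_y v_{xx}), so that the commutator contains no λ-dependent terms for any smooth v; in particular [A,B] = 0 for all λ if and only if v satisfies v_{xt} = v_{yy} + v_x v_{xy} - v_y v_{xx}. -/

import Mathlib

/- STATEMENT 14: For A = ∂_y - (λ - v_x)∂_x and B = ∂_t - (λ² - v_xλ - v_y)∂_x,
[A,B] = c ∂_x with c = -(v_{xt} - v_{yy} - v_x v_{xy} + v_y v_{xx}) (no λ-dependent terms),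
and [A,B] = 0 for all λ iff v satisfies the Pavlov equation
v_{xt} = v_{yy} + v_x v_{xy} - v_y v_{xx}.
Coordinates on ℝ³: 0 = x, 1 = y, 2 = t. -/

noncomputable def pd {n : ℕ} (i : Fin n) (f : (Fin n → ℝ) → ℝ) : (Fin n → ℝ) → ℝ :=
  fun x => fderiv ℝ f x (Pi.single i 1)

/-- A = ∂_y - (λ - v_x)∂_x -/
noncomputable def Aop (v : (Fin 3 → ℝ) → ℝ) (lam : ℝ) (f : (Fin 3 → ℝ) → ℝ) :
    (Fin 3 → ℝ) → ℝ :=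
  fun p => pd 1 f p - (lam - pd 0 v p) * pd 0 f p

/-- B = ∂_t - (λ² - v_xλ - v_y)∂_x -/
noncomputable def Bop (v : (Fin 3 → ℝ) → ℝ) (lam : ℝ) (f : (Fin 3 → ℝ) → ℝ) :
    (Fin 3 → ℝ) → ℝ :=
  fun p => pd 2 f p - (lam ^ 2 - pd 0 v p * lam - pd 1 v p) * pd 0 f p


lemma pd_smooth {n : ℕ} (i : Fin n) {f : (Fin n → ℝ) → ℝ} (hf : ContDiff ℝ (⊤ : ℕ∞) f) :
    ContDiff ℝ (⊤ : ℕ∞) (pd i f) := by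
  have h : ContDiff ℝ (⊤ : ℕ∞) (fderiv ℝ f) := hf.fderiv_right (by simp)
  exact h.clm_apply contDiff_const

lemma pd_sub {n : ℕ} (i : Fin n) {f g : (Fin n → ℝ) → ℝ} {p : Fin n → ℝ}
    (hf : DifferentiableAt ℝ f p) (hg : DifferentiableAt ℝ g p) :
    pd i (fun q => f q - g q) p = pd i f p - pd i g p := by
  simp [pd, fderiv_fun_sub hf hg]

lemma pd_mul {n : ℕ} (i : Fin n) {f g : (Fin n → ℝ) → ℝ} {p : Fin n → ℝ}
    (hf : DifferentiableAt ℝ f p) (hg : DifferentiableAt ℝ g p) :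
    pd i (fun q => f q * g q) p = pd i f p * g p + f p * pd i g p := by
  simp [pd, fderiv_fun_mul hf hg]; ring

lemma pd_const {n : ℕ} (i : Fin n) (c : ℝ) (p : Fin n → ℝ) :
    pd i (fun _ => c) p = 0 := by simp [pd]

lemma pd_symm {f : (Fin 3 → ℝ) → ℝ} (hf : ContDiff ℝ (⊤ : ℕ∞) f) (i j : Fin 3) (p : Fin 3 → ℝ) :
    pd i (pd j f) p = pd j (pd i f) p := by
  have hd : Differentiable ℝ (fderiv ℝ f) :=
    (hf.fderiv_right (m := (⊤ : ℕ∞)) (by simp)).differentiable (by simp)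
  have key : ∀ (a b : Fin 3), pd a (pd b f) p =
      fderiv ℝ (fderiv ℝ f) p (Pi.single a 1) (Pi.single b 1) := by
    intro a b
    have : pd a (pd b f) p =
        fderiv ℝ (fun q => (fderiv ℝ f q) (Pi.single b 1)) p (Pi.single a 1) := rfl
    rw [this, fderiv_clm_apply (hd p) (differentiableAt_const _)]
    simp
  rw [key, key]
  exact (hf.contDiffAt.isSymmSndFDerivAt (by rw [minSmoothness_of_isRCLikeNormedField]; exact WithTop.coe_le_coe.mpr (le_top : (2 : ℕ∞) ≤ ⊤))) _ _

lemma pd_L (i j : Fin 3) {g f : (Fin 3 → ℝ) → ℝ} (hg : ContDiff ℝ (⊤ : ℕ∞) g)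
    (hf : ContDiff ℝ (⊤ : ℕ∞) f) (p : Fin 3 → ℝ) :
    pd i (fun q => pd j f q - g q * pd 0 f q) p
      = pd i (pd j f) p - (pd i g p * pd 0 f p + g p * pd i (pd 0 f) p) := by
  rw [pd_sub i ((pd_smooth j hf).differentiable (by simp) p)
      ((hg.mul (pd_smooth 0 hf)).differentiable (by simp) p),
    pd_mul i (hg.differentiable (by simp) p) ((pd_smooth 0 hf).differentiable (by simp) p)]

lemma main_comm (v : (Fin 3 → ℝ) → ℝ) (hv : ContDiff ℝ (⊤ : ℕ∞) v) (lam : ℝ)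
    (f : (Fin 3 → ℝ) → ℝ) (hf : ContDiff ℝ (⊤ : ℕ∞) f) (p : Fin 3 → ℝ) :
    Aop v lam (Bop v lam f) p - Bop v lam (Aop v lam f) p =
      (-(pd 2 (pd 0 v) p - pd 1 (pd 1 v) p - pd 0 v p * pd 1 (pd 0 v) p
          + pd 1 v p * pd 0 (pd 0 v) p)) * pd 0 f p := by
  have hv0 := pd_smooth 0 hv
  have hv1 := pd_smooth 1 hv
  have hga : ContDiff ℝ (⊤ : ℕ∞) (fun q => lam - pd 0 v q) := contDiff_const.sub hv0
  have hgb : ContDiff ℝ (⊤ : ℕ∞) (fun q => lam ^ 2 - pd 0 v q * lam - pd 1 v q) :=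
    (contDiff_const.sub (hv0.mul contDiff_const)).sub hv1
  have D : ∀ {g : (Fin 3 → ℝ) → ℝ}, ContDiff ℝ (⊤ : ℕ∞) g → DifferentiableAt ℝ g p :=
    fun hg => hg.differentiable (by simp) p
  have pga : ∀ i : Fin 3, pd i (fun q => lam - pd 0 v q) p = -pd i (pd 0 v) p := by
    intro i
    rw [pd_sub i (D contDiff_const) (D hv0), pd_const]; ring
  have pgb : ∀ i : Fin 3, pd i (fun q => lam ^ 2 - pd 0 v q * lam - pd 1 v q) p
      = -(pd i (pd 0 v) p * lam) - pd i (pd 1 v) p := by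
    intro i
    rw [show (fun q => lam ^ 2 - pd 0 v q * lam - pd 1 v q)
        = fun q => (fun r => lam ^ 2 - pd 0 v r * lam) q - pd 1 v q from rfl,
      pd_sub i (D (contDiff_const.sub (hv0.mul contDiff_const))) (D hv1),
      pd_sub i (D contDiff_const) (D (hv0.mul contDiff_const)), pd_const,
      pd_mul i (D hv0) (D contDiff_const), pd_const]
    ring
  have hBf : Bop v lam f = fun q => pd 2 f q
      - (fun r => lam ^ 2 - pd 0 v r * lam - pd 1 v r) q * pd 0 f q := rfl
  have hAf : Aop v lam f = fun q => pd 1 f q - (fun r => lam - pd 0 v r) q * pd 0 f q := rfl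
  have pdB : ∀ i : Fin 3, pd i (Bop v lam f) p = pd i (pd 2 f) p
      - ((-(pd i (pd 0 v) p * lam) - pd i (pd 1 v) p) * pd 0 f p
        + (lam ^ 2 - pd 0 v p * lam - pd 1 v p) * pd i (pd 0 f) p) := by
    intro i
    rw [hBf, pd_L i 2 hgb hf, pgb]
  have pdA : ∀ i : Fin 3, pd i (Aop v lam f) p = pd i (pd 1 f) p
      - ((-pd i (pd 0 v) p) * pd 0 f p + (lam - pd 0 v p) * pd i (pd 0 f) p) := by
    intro i
    rw [hAf, pd_L i 1 hga hf, pga]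
  show (pd 1 (Bop v lam f) p - (lam - pd 0 v p) * pd 0 (Bop v lam f) p)
      - (pd 2 (Aop v lam f) p - (lam ^ 2 - pd 0 v p * lam - pd 1 v p) * pd 0 (Aop v lam f) p) = _
  rw [pdB 1, pdB 0, pdA 2, pdA 0,
    pd_symm hf 1 2, pd_symm hf 0 2, pd_symm hf 0 1, pd_symm hv 0 1]
  ring

theorem stmt14 (v : (Fin 3 → ℝ) → ℝ) (hv : ContDiff ℝ (⊤ : ℕ∞) v) :
    -- [A,B] = c ∂_x, with c independent of λ (no λ-dependent terms)
    (∀ (lam : ℝ) (f : (Fin 3 → ℝ) → ℝ), ContDiff ℝ (⊤ : ℕ∞) f → ∀ p,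
        Aop v lam (Bop v lam f) p - Bop v lam (Aop v lam f) p =
          (-(pd 2 (pd 0 v) p - pd 1 (pd 1 v) p - pd 0 v p * pd 1 (pd 0 v) p
              + pd 1 v p * pd 0 (pd 0 v) p)) * pd 0 f p) ∧
    -- [A,B] = 0 for all λ iff the Pavlov equation holds
    ((∀ (lam : ℝ) (f : (Fin 3 → ℝ) → ℝ), ContDiff ℝ (⊤ : ℕ∞) f → ∀ p,
        Aop v lam (Bop v lam f) p = Bop v lam (Aop v lam f) p) ↔
      (∀ p, pd 2 (pd 0 v) p =
          pd 1 (pd 1 v) p + pd 0 v p * pd 1 (pd 0 v) p - pd 1 v p * pd 0 (pd 0 v) p)) := by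
  refine ⟨fun lam f hf p => main_comm v hv lam f hf p, ?_, ?_⟩
  · intro h p
    set f : (Fin 3 → ℝ) → ℝ := fun q => q 0 with hfdef
    have hf : ContDiff ℝ (⊤ : ℕ∞) f :=
      (ContinuousLinearMap.proj (R := ℝ) (φ := fun _ : Fin 3 => ℝ) 0).contDiff
    have hpd0 : pd 0 f p = 1 := by
      have : fderiv ℝ f p = ContinuousLinearMap.proj (R := ℝ) (φ := fun _ : Fin 3 => ℝ) 0 :=
        (ContinuousLinearMap.proj (R := ℝ) (φ := fun _ : Fin 3 => ℝ) 0).fderiv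
      simp [pd, this]
    have h1 := main_comm v hv 0 f hf p
    rw [h 0 f hf p, sub_self, hpd0, mul_one] at h1
    linarith [h1.symm]
  · intro h lam f hf p
    have h1 := main_comm v hv lam f hf p
    have : pd 2 (pd 0 v) p - pd 1 (pd 1 v) p - pd 0 v p * pd 1 (pd 0 v) p
        + pd 1 v p * pd 0 (pd 0 v) p = 0 := by
      have := h p; linarith
    rw [this, neg_zero, zero_mul] at h1
    linarith
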